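/- Theorem 2.1 (conservation of mass / L²-stability of the semi-discrete DG scheme): If (u_h, w_h) is a solution of the semi-discrete DG scheme for the nonlinear biharmonic Schrödinger equation with numerical fluxes given by parameters α₁, α₂ ∈ [0,1], then the discrete mass M_h(t) = ∫_I |u_h(x,t)|² dx satisfies M_h(t) = M_h(0) for all t ≥ 0. -/

import Mathlib

open MeasureTheory

noncomputable section

/-- Minus-side (left) trace of a piecewise polynomial `v` at the interface
`x_{j+1/2}` (the right endpoint of cell `I_j`).  Cells are indexed by `Fin (n+1)`
and mesh points by `Fin (n+2)`. -/
def trMinus (n : ℕ) (x : Fin (n + 2) → ℝ) (v : Fin (n + 1) → Polynomial ℂ)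
    (j : Fin (n + 1)) : ℂ :=
  (v j).eval ((x j.succ : ℝ) : ℂ)

/-- Plus-side (right) trace of a piecewise polynomial `v` at the interface
`x_{j+1/2}`: the value of the polynomial of the next cell (periodically) at its left
endpoint.  For the last interface this is cell `0` at `x_a`, realizing the periodic
identification of `x_{1/2}` and `x_{n+1/2}`. -/
def trPlus (n : ℕ) (x : Fin (n + 2) → ℝ) (v : Fin (n + 1) → Polynomial ℂ)
    (j : Fin (n + 1)) : ℂ :=
  (v (j + 1)).eval ((x (j + 1).castSucc : ℝ) : ℂ)

/-- Numerical flux `û = α₁ u_h⁺ + (1−α₁) u_h⁻` at the interface `x_{j+1/2}`. -/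
def fluxUhat (n : ℕ) (x : Fin (n + 2) → ℝ) (α₁ : ℝ)
    (uh : Fin (n + 1) → Polynomial ℂ) (j : Fin (n + 1)) : ℂ :=
  (α₁ : ℂ) * trPlus n x uh j + (1 - (α₁ : ℂ)) * trMinus n x uh j

/-- Numerical flux `w̃ₓ = (1−α₁) (w_h)ₓ⁺ + α₁ (w_h)ₓ⁻` at the interface `x_{j+1/2}`. -/
def fluxWx (n : ℕ) (x : Fin (n + 2) → ℝ) (α₁ : ℝ)
    (wh : Fin (n + 1) → Polynomial ℂ) (j : Fin (n + 1)) : ℂ :=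
  (1 - (α₁ : ℂ)) * trPlus n x (fun k => (wh k).derivative) j
    + (α₁ : ℂ) * trMinus n x (fun k => (wh k).derivative) j

/-- Numerical flux `ûₓ = α₂ (u_h)ₓ⁺ + (1−α₂) (u_h)ₓ⁻` at the interface `x_{j+1/2}`. -/
def fluxUx (n : ℕ) (x : Fin (n + 2) → ℝ) (α₂ : ℝ)
    (uh : Fin (n + 1) → Polynomial ℂ) (j : Fin (n + 1)) : ℂ :=
  (α₂ : ℂ) * trPlus n x (fun k => (uh k).derivative) j
    + (1 - (α₂ : ℂ)) * trMinus n x (fun k => (uh k).derivative) j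

/-- Numerical flux `w̃ = (1−α₂) w_h⁺ + α₂ w_h⁻` at the interface `x_{j+1/2}`. -/
def fluxWtilde (n : ℕ) (x : Fin (n + 2) → ℝ) (α₂ : ℝ)
    (wh : Fin (n + 1) → Polynomial ℂ) (j : Fin (n + 1)) : ℂ :=
  (1 - (α₂ : ℂ)) * trPlus n x wh j + (α₂ : ℂ) * trMinus n x wh j

open Polynomial ComplexConjugate

/-!
Test the first scheme equation with `φ = ū_h` and the second with `ψ = w̄_h`. On each cell the
volume terms `∫ w_h ū_hₓₓ` and `∫ u_h w̄_hₓₓ` are related by Green's identity, and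
`∫ |u_h|² F'(|u_h|²)`, `∫ |w_h|²` are real; taking imaginary parts leaves
`Re ∫ ∂ₜu_h ū_h` equal to the imaginary part of boundary terms at the two ends of the cell.
Summed over the periodic mesh these regroup into one contribution per interface, which the
choice of fluxes makes real. Hence `M_h' = 2 Re ∑ ∫ ∂ₜu_h ū_h = 0`.

The time derivative passes under the integral because on polynomials of degree `≤ 2q` the
integral is a fixed linear combination of finitely many point values.
-/

def conjPoly (p : ℂ[X]) : ℂ[X] := p.map (starRingEnd ℂ)

lemma eval_ofReal_conjPoly (p : ℂ[X]) (y : ℝ) :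
    (conjPoly p).eval (y : ℂ) = conj (p.eval (y : ℂ)) := by
  rw [conjPoly, ← Complex.conj_ofReal y, eval_map_apply, Complex.conj_ofReal]

lemma derivative_conjPoly (p : ℂ[X]) : derivative (conjPoly p) = conjPoly (derivative p) :=
  derivative_map p _

lemma natDegree_conjPoly_le (p : ℂ[X]) : (conjPoly p).natDegree ≤ p.natDegree :=
  natDegree_map_le

lemma exists_integral_eval_eq_sum (d : ℕ) (a b : ℝ) :
    ∃ c : Fin (d + 1) → ℂ, ∀ p : ℂ[X], p.natDegree ≤ d →
      ∫ y in a..b, p.eval (y : ℂ) = ∑ k, c k * p.eval (((k : ℕ) : ℝ) : ℂ) := by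
  set node : Fin (d + 1) → ℂ := fun k => (((k : ℕ) : ℝ) : ℂ)
  have hnode : Set.InjOn node (Finset.univ : Finset (Fin (d + 1))) := fun i _ j _ hij =>
    Fin.ext (by simpa [node] using hij)
  refine ⟨fun k => ∫ y in a..b, (Lagrange.basis Finset.univ node k).eval (y : ℂ),
    fun p hp => ?_⟩
  have hdeg : p.degree < (Finset.univ : Finset (Fin (d + 1))).card := by
    rw [Finset.card_univ, Fintype.card_fin]
    exact degree_le_natDegree.trans_lt (by exact_mod_cast Nat.lt_succ_of_le hp)
  conv_lhs => rw [Lagrange.eq_interpolate hnode hdeg, Lagrange.interpolate_apply]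
  simp only [eval_finsetSum, eval_mul, eval_C]
  rw [intervalIntegral.integral_finsetSum fun k _ =>
    Continuous.intervalIntegrable (by fun_prop) _ _]
  refine Finset.sum_congr rfl fun k _ => ?_
  rw [intervalIntegral.integral_const_mul, mul_comm]

lemma hasDerivWithinAt_integral_eval {p : ℝ → ℂ[X]} {p' : ℂ[X]} {d : ℕ} {s : Set ℝ}
    {t : ℝ} (a b : ℝ) (ht : t ∈ s) (hp : ∀ r ∈ s, (p r).natDegree ≤ d)
    (hp' : p'.natDegree ≤ d)
    (hderiv : ∀ y : ℝ, HasDerivWithinAt (fun r => (p r).eval (y : ℂ)) (p'.eval (y : ℂ)) s t) :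
    HasDerivWithinAt (fun r => ∫ y in a..b, (p r).eval (y : ℂ))
      (∫ y in a..b, p'.eval (y : ℂ)) s t := by
  obtain ⟨c, hc⟩ := exists_integral_eval_eq_sum d a b
  rw [hc p' hp']
  exact (HasDerivWithinAt.fun_sum fun k _ => (hderiv _).const_mul (c k)).congr
    (fun r hr => hc _ (hp r hr)) (hc _ (hp t ht))

lemma integral_norm_sq_eval (p : ℂ[X]) (a b : ℝ) :
    ∫ y in a..b, ‖p.eval (y : ℂ)‖ ^ 2 = (∫ y in a..b, (p * conjPoly p).eval (y : ℂ)).re := by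
  have h (y : ℝ) : (p * conjPoly p).eval (y : ℂ) = ((‖p.eval (y : ℂ)‖ ^ 2 : ℝ) : ℂ) := by
    rw [eval_mul, eval_ofReal_conjPoly, Complex.mul_conj, Complex.sq_norm]
  simp only [h, intervalIntegral.integral_ofReal, Complex.ofReal_re]

lemma hasDerivWithinAt_integral_norm_sq_eval {u : ℝ → ℂ[X]} {u' : ℂ[X]} {d : ℕ}
    {s : Set ℝ} {t : ℝ} (a b : ℝ) (ht : t ∈ s) (hu : ∀ r ∈ s, (u r).natDegree ≤ d)
    (hu' : u'.natDegree ≤ d)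
    (hderiv : ∀ y : ℝ, HasDerivWithinAt (fun r => (u r).eval (y : ℂ)) (u'.eval (y : ℂ)) s t) :
    HasDerivWithinAt (fun r => ∫ y in a..b, ‖(u r).eval (y : ℂ)‖ ^ 2)
      (2 * (∫ y in a..b, u'.eval (y : ℂ) * conj ((u t).eval (y : ℂ))).re) s t := by
  have hdeg {v w : ℂ[X]} (hv : v.natDegree ≤ d) (hw : w.natDegree ≤ d) :
      (v * conjPoly w).natDegree ≤ d + d :=
    natDegree_mul_le.trans (add_le_add hv ((natDegree_conjPoly_le w).trans hw))
  have hsq := hasDerivWithinAt_integral_eval (p := fun r => u r * conjPoly (u r))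
    (p' := u' * conjPoly (u t) + u t * conjPoly u') a b ht (fun r hr => hdeg (hu r hr) (hu r hr))
    ((natDegree_add_le _ _).trans (max_le (hdeg hu' (hu t ht)) (hdeg (hu t ht) hu')))
    fun y => by
      have hconj : HasDerivWithinAt (fun r => conj ((u r).eval (y : ℂ))) (conj (u'.eval (y : ℂ)))
          s t := by simpa only [starRingEnd_apply] using (hderiv y).star
      simpa only [eval_mul, eval_add, eval_ofReal_conjPoly] using (hderiv y).fun_mul hconj
  have hre := Complex.reCLM.hasFDerivAt.comp_hasDerivWithinAt t hsq
  simp only [Function.comp_def, Complex.reCLM_apply, ← integral_norm_sq_eval] at hre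
  refine hre.congr_deriv ?_
  simp only [eval_add, eval_mul, eval_ofReal_conjPoly]
  rw [intervalIntegral.integral_add (Continuous.intervalIntegrable (by fun_prop) _ _)
    (Continuous.intervalIntegrable (by fun_prop) _ _)]
  have hswap : ∫ y in a..b, (u t).eval (y : ℂ) * conj (u'.eval (y : ℂ))
      = conj (∫ y in a..b, u'.eval (y : ℂ) * conj ((u t).eval (y : ℂ))) := by
    simp only [← intervalIntegral.intervalIntegral_conj, map_mul, Complex.conj_conj, mul_comm]
  rw [hswap, Complex.add_conj, Complex.ofReal_re]

lemma integral_eval_green (p r : ℂ[X]) (a b : ℝ) :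
    ∫ y in a..b, (p.eval (y : ℂ) * r.derivative.derivative.eval (y : ℂ)
        - p.derivative.derivative.eval (y : ℂ) * r.eval (y : ℂ)) =
      (p.eval (b : ℂ) * r.derivative.eval (b : ℂ) - p.derivative.eval (b : ℂ) * r.eval (b : ℂ))
        - (p.eval (a : ℂ) * r.derivative.eval (a : ℂ)
          - p.derivative.eval (a : ℂ) * r.eval (a : ℂ)) := by
  have hd (v : ℂ[X]) (y : ℝ) :
      HasDerivAt (fun y : ℝ => v.eval (y : ℂ)) (v.derivative.eval (y : ℂ)) y :=
    (v.hasDerivAt (y : ℂ)).comp_ofReal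
  refine intervalIntegral.integral_eq_sub_of_hasDerivAt (f := fun y : ℝ =>
    p.eval (y : ℂ) * r.derivative.eval (y : ℂ) - p.derivative.eval (y : ℂ) * r.eval (y : ℂ))
    (fun y _ => ?_) ?_
  · convert ((hd p y).fun_mul (hd r.derivative y)).fun_sub
      ((hd p.derivative y).fun_mul (hd r y)) using 1
    ring
  · exact Continuous.intervalIntegrable (by fun_prop) _ _

/-- The contribution of one side of an interface to the energy identity obtained by testing the
scheme with `(ū_h, w̄_h)`: `Wx, Wt, Ux, Uh` are the fluxes `w̃ₓ, w̃, ûₓ, û` there and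
`u, ux, w, wx` the traces of `u_h, (u_h)ₓ, w_h, (w_h)ₓ` from that side. -/
def interfaceForm (Wx Wt Ux Uh u ux w wx : ℂ) : ℂ :=
  -Wx * conj u + Wt * conj ux - Ux * conj w + Uh * conj wx - (w * conj ux - wx * conj u)

lemma im_intervalIntegral_eq_zero {f : ℝ → ℂ} (hf : ∀ y, conj (f y) = f y) (a b : ℝ) :
    (∫ y in a..b, f y).im = 0 := by
  rw [← Complex.conj_eq_iff_im, ← intervalIntegral.intervalIntegral_conj]
  simp only [hf]

lemma re_integral_mul_conj_eq_im_interfaceForm_sub {q : ℕ} {a b : ℝ} {u w ut : ℂ[X]}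
    {g : ℝ → ℝ} (hg : Continuous g) (hu : u.natDegree ≤ q) (hw : w.natDegree ≤ q)
    {Wxa Wxb Wta Wtb Uxa Uxb Uha Uhb : ℂ}
    (h1 : ∀ φ : ℂ[X], φ.natDegree ≤ q →
      ∫ y in a..b, Complex.I * ut.eval (y : ℂ) * φ.eval (y : ℂ)
          + w.eval (y : ℂ) * φ.derivative.derivative.eval (y : ℂ)
          + u.eval (y : ℂ) * (g y : ℂ) * φ.eval (y : ℂ) =
        -Wxb * φ.eval (b : ℂ) + Wxa * φ.eval (a : ℂ) + Wtb * φ.derivative.eval (b : ℂ)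
          - Wta * φ.derivative.eval (a : ℂ))
    (h2 : ∀ ψ : ℂ[X], ψ.natDegree ≤ q →
      ∫ y in a..b, w.eval (y : ℂ) * ψ.eval (y : ℂ)
          - u.eval (y : ℂ) * ψ.derivative.derivative.eval (y : ℂ) =
        Uxb * ψ.eval (b : ℂ) - Uxa * ψ.eval (a : ℂ) - Uhb * ψ.derivative.eval (b : ℂ)
          + Uha * ψ.derivative.eval (a : ℂ)) :
    (∫ y in a..b, ut.eval (y : ℂ) * conj (u.eval (y : ℂ))).re =
      (interfaceForm Wxb Wtb Uxb Uhb (u.eval (b : ℂ)) (u.derivative.eval (b : ℂ))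
          (w.eval (b : ℂ)) (w.derivative.eval (b : ℂ))
        - interfaceForm Wxa Wta Uxa Uha (u.eval (a : ℂ)) (u.derivative.eval (a : ℂ))
          (w.eval (a : ℂ)) (w.derivative.eval (a : ℂ))).im := by
  have e1 := h1 (conjPoly u) ((natDegree_conjPoly_le u).trans hu)
  have e2 := h2 (conjPoly w) ((natDegree_conjPoly_le w).trans hw)
  have green := integral_eval_green w (conjPoly u) a b
  simp only [derivative_conjPoly, eval_ofReal_conjPoly] at e1 e2 green
  rw [intervalIntegral.integral_add (Continuous.intervalIntegrable (by fun_prop) _ _)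
      (Continuous.intervalIntegrable (by fun_prop) _ _),
    intervalIntegral.integral_add (Continuous.intervalIntegrable (by fun_prop) _ _)
      (Continuous.intervalIntegrable (by fun_prop) _ _)] at e1
  rw [intervalIntegral.integral_sub (Continuous.intervalIntegrable (by fun_prop) _ _)
      (Continuous.intervalIntegrable (by fun_prop) _ _)] at e2 green
  have hS : ∫ y in a..b, Complex.I * ut.eval (y : ℂ) * conj (u.eval (y : ℂ))
      = Complex.I * ∫ y in a..b, ut.eval (y : ℂ) * conj (u.eval (y : ℂ)) := by
    simp only [← intervalIntegral.integral_const_mul, mul_assoc]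
  have hU : ∫ y in a..b, w.derivative.derivative.eval (y : ℂ) * conj (u.eval (y : ℂ))
      = conj (∫ y in a..b, u.eval (y : ℂ) * conj (w.derivative.derivative.eval (y : ℂ))) := by
    simp only [← intervalIntegral.intervalIntegral_conj, map_mul, Complex.conj_conj, mul_comm]
  have hR := im_intervalIntegral_eq_zero
    (f := fun y => u.eval (y : ℂ) * (g y : ℂ) * conj (u.eval (y : ℂ)))
    (fun y => by simp only [map_mul, Complex.conj_conj, Complex.conj_ofReal]; ring) a b
  have hW := im_intervalIntegral_eq_zero (f := fun y => w.eval (y : ℂ) * conj (w.eval (y : ℂ)))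
    (fun y => by simp only [map_mul, Complex.conj_conj]; ring) a b
  rw [hS] at e1
  rw [hU] at green
  set S := ∫ y in a..b, ut.eval (y : ℂ) * conj (u.eval (y : ℂ))
  set R := ∫ y in a..b, u.eval (y : ℂ) * (g y : ℂ) * conj (u.eval (y : ℂ))
  set W := ∫ y in a..b, w.eval (y : ℂ) * conj (w.eval (y : ℂ))
  set U := ∫ y in a..b, u.eval (y : ℂ) * conj (w.derivative.derivative.eval (y : ℂ))
  have hcombination_im : (Complex.I * S + R - W + (U + conj U)).im = S.re := by
    simp [Complex.add_conj, hR, hW]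
  rw [← hcombination_im]
  congr 1
  unfold interfaceForm
  linear_combination e1 - e2 - green

section Scheme

variable (n : ℕ) (x : Fin (n + 2) → ℝ) (α₁ α₂ : ℝ)

/-- `tr` is `trMinus n x` or `trPlus n x`, selecting the side of interface `j`. -/
def interfaceTerm (u w : Fin (n + 1) → ℂ[X]) (tr : (Fin (n + 1) → ℂ[X]) → Fin (n + 1) → ℂ)
    (j : Fin (n + 1)) : ℂ :=
  interfaceForm (fluxWx n x α₁ w j) (fluxWtilde n x α₂ w j) (fluxUx n x α₂ u j)
    (fluxUhat n x α₁ u j) (tr u j) (tr (fun k => (u k).derivative) j) (tr w j)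
    (tr (fun k => (w k).derivative) j)

lemma im_interfaceTerm_trMinus_sub_trPlus (u w : Fin (n + 1) → ℂ[X]) (j : Fin (n + 1)) :
    (interfaceTerm n x α₁ α₂ u w (trMinus n x) j
      - interfaceTerm n x α₁ α₂ u w (trPlus n x) j).im = 0 := by
  rw [← Complex.conj_eq_iff_im]
  simp only [interfaceTerm, interfaceForm, fluxWx, fluxWtilde, fluxUx, fluxUhat, map_sub,
    map_add, map_mul, map_neg, map_one, Complex.conj_conj, Complex.conj_ofReal]
  ring

variable (q : ℕ) (F' : ℝ → ℝ) (u w ut : Fin (n + 1) → ℂ[X])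

def FirstSchemeEq : Prop :=
  ∀ j : Fin (n + 1), ∀ φ : ℂ[X], φ.natDegree ≤ q →
    (∫ y in (x j.castSucc : ℝ)..(x j.succ : ℝ),
        Complex.I * (ut j).eval (y : ℂ) * φ.eval (y : ℂ)
          + (w j).eval (y : ℂ) * φ.derivative.derivative.eval (y : ℂ)
          + (u j).eval (y : ℂ)
              * (F' (‖(u j).eval (y : ℂ)‖ ^ 2) : ℂ)
              * φ.eval (y : ℂ)) =
      - fluxWx n x α₁ w j * φ.eval (x j.succ : ℂ)
        + fluxWx n x α₁ w (j - 1) * φ.eval (x j.castSucc : ℂ)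
        + fluxWtilde n x α₂ w j * φ.derivative.eval (x j.succ : ℂ)
        - fluxWtilde n x α₂ w (j - 1) * φ.derivative.eval (x j.castSucc : ℂ)

def SecondSchemeEq : Prop :=
  ∀ j : Fin (n + 1), ∀ ψ : ℂ[X], ψ.natDegree ≤ q →
    (∫ y in (x j.castSucc : ℝ)..(x j.succ : ℝ),
        (w j).eval (y : ℂ) * ψ.eval (y : ℂ)
          - (u j).eval (y : ℂ) * ψ.derivative.derivative.eval (y : ℂ)) =
      fluxUx n x α₂ u j * ψ.eval (x j.succ : ℂ)
        - fluxUx n x α₂ u (j - 1) * ψ.eval (x j.castSucc : ℂ)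
        - fluxUhat n x α₁ u j * ψ.derivative.eval (x j.succ : ℂ)
        + fluxUhat n x α₁ u (j - 1) * ψ.derivative.eval (x j.castSucc : ℂ)

variable {n x α₁ α₂ q F' u w ut}

lemma re_sum_integral_mul_conj_eq_zero (hF' : ContinuousOn F' (Set.Ici 0))
    (hu : ∀ j, (u j).natDegree ≤ q) (hw : ∀ j, (w j).natDegree ≤ q)
    (h1 : FirstSchemeEq n x α₁ α₂ q F' u w ut) (h2 : SecondSchemeEq n x α₁ α₂ q u w) :
    (∑ j, ∫ y in (x j.castSucc : ℝ)..(x j.succ : ℝ),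
      (ut j).eval (y : ℂ) * conj ((u j).eval (y : ℂ))).re = 0 := by
  have hcell (j : Fin (n + 1)) : (∫ y in (x j.castSucc : ℝ)..(x j.succ : ℝ),
      (ut j).eval (y : ℂ) * conj ((u j).eval (y : ℂ))).re =
      (interfaceTerm n x α₁ α₂ u w (trMinus n x) j
        - interfaceTerm n x α₁ α₂ u w (trPlus n x) (j - 1)).im := by
    have hg : Continuous fun y : ℝ => F' (‖(u j).eval (y : ℂ)‖ ^ 2) :=
      hF'.comp_continuous (by fun_prop) fun _ => Set.mem_Ici.2 (sq_nonneg _)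
    rw [re_integral_mul_conj_eq_im_interfaceForm_sub hg (hu j) (hw j) (h1 j) (h2 j)]
    simp only [interfaceTerm, trMinus, trPlus, sub_add_cancel]
  have hshift : ∑ j, interfaceTerm n x α₁ α₂ u w (trPlus n x) (j - 1)
      = ∑ j, interfaceTerm n x α₁ α₂ u w (trPlus n x) j :=
    Fintype.sum_equiv (Equiv.subRight 1) _ _ fun _ => rfl
  rw [Complex.re_sum, Finset.sum_congr rfl fun j _ => hcell j, ← Complex.im_sum,
    Finset.sum_sub_distrib, hshift, ← Finset.sum_sub_distrib, Complex.im_sum]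
  exact Finset.sum_eq_zero fun j _ => im_interfaceTerm_trMinus_sub_trPlus n x α₁ α₂ u w j

end Scheme

lemma eq_of_hasDerivWithinAt_Ici_zero {f : ℝ → ℝ} {a : ℝ}
    (hf : ∀ s, a ≤ s → HasDerivWithinAt f 0 (Set.Ici a) s) {t : ℝ} (ht : a ≤ t) :
    f t = f a :=
  constant_of_has_deriv_right_zero
    (fun s hs => (hf s hs.1).continuousWithinAt.mono Set.Icc_subset_Ici_self)
    (fun s hs => (hf s hs.1).mono (Set.Ici_subset_Ici.2 hs.1)) t ⟨ht, le_rfl⟩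

theorem dg_mass_conservation_general
    (n q : ℕ)
    (x : Fin (n + 2) → ℝ)
    (F' : ℝ → ℝ) (hF' : ContinuousOn F' (Set.Ici 0))
    (α₁ α₂ : ℝ)
    (uh wh uht : ℝ → Fin (n + 1) → Polynomial ℂ)
    (hdegu : ∀ t : ℝ, 0 ≤ t → ∀ j, (uh t j).natDegree ≤ q)
    (hdegw : ∀ t : ℝ, 0 ≤ t → ∀ j, (wh t j).natDegree ≤ q)
    (hdegut : ∀ t : ℝ, 0 ≤ t → ∀ j, (uht t j).natDegree ≤ q)
    -- u_h is differentiable in time with derivative u_ht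
    (hderiv : ∀ t : ℝ, 0 ≤ t → ∀ j, ∀ y : ℝ,
      HasDerivWithinAt (fun s : ℝ => (uh s j).eval ((y : ℝ) : ℂ))
        ((uht t j).eval ((y : ℝ) : ℂ)) (Set.Ici 0) t)
    -- first DG scheme equation, on each cell, for every test polynomial φ of degree ≤ q
    (scheme1 : ∀ t : ℝ, 0 ≤ t → ∀ j : Fin (n + 1), ∀ φ : Polynomial ℂ, φ.natDegree ≤ q →
      (∫ y in (x j.castSucc : ℝ)..(x j.succ : ℝ),
          Complex.I * (uht t j).eval ((y : ℝ) : ℂ) * φ.eval ((y : ℝ) : ℂ)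
            + (wh t j).eval ((y : ℝ) : ℂ) * (φ.derivative.derivative).eval ((y : ℝ) : ℂ)
            + (uh t j).eval ((y : ℝ) : ℂ)
                * (F' (‖(uh t j).eval ((y : ℝ) : ℂ)‖ ^ 2) : ℂ)
                * φ.eval ((y : ℝ) : ℂ)) =
        - fluxWx n x α₁ (wh t) j * φ.eval ((x j.succ : ℝ) : ℂ)
          + fluxWx n x α₁ (wh t) (j - 1) * φ.eval ((x j.castSucc : ℝ) : ℂ)
          + fluxWtilde n x α₂ (wh t) j * φ.derivative.eval ((x j.succ : ℝ) : ℂ)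
          - fluxWtilde n x α₂ (wh t) (j - 1) * φ.derivative.eval ((x j.castSucc : ℝ) : ℂ))
    -- second DG scheme equation, on each cell, for every test polynomial ψ of degree ≤ q
    (scheme2 : ∀ t : ℝ, 0 ≤ t → ∀ j : Fin (n + 1), ∀ ψ : Polynomial ℂ, ψ.natDegree ≤ q →
      (∫ y in (x j.castSucc : ℝ)..(x j.succ : ℝ),
          (wh t j).eval ((y : ℝ) : ℂ) * ψ.eval ((y : ℝ) : ℂ)
            - (uh t j).eval ((y : ℝ) : ℂ) * (ψ.derivative.derivative).eval ((y : ℝ) : ℂ)) =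
        fluxUx n x α₂ (uh t) j * ψ.eval ((x j.succ : ℝ) : ℂ)
          - fluxUx n x α₂ (uh t) (j - 1) * ψ.eval ((x j.castSucc : ℝ) : ℂ)
          - fluxUhat n x α₁ (uh t) j * ψ.derivative.eval ((x j.succ : ℝ) : ℂ)
          + fluxUhat n x α₁ (uh t) (j - 1) * ψ.derivative.eval ((x j.castSucc : ℝ) : ℂ)) :
    -- conclusion: conservation of the discrete mass M_h(t) = ∫_I |u_h|² dx
    ∀ t : ℝ, 0 ≤ t →
      (∑ j : Fin (n + 1), ∫ y in (x j.castSucc : ℝ)..(x j.succ : ℝ),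
          ‖(uh t j).eval ((y : ℝ) : ℂ)‖ ^ 2) =
      ∑ j : Fin (n + 1), ∫ y in (x j.castSucc : ℝ)..(x j.succ : ℝ),
          ‖(uh 0 j).eval ((y : ℝ) : ℂ)‖ ^ 2 := by
  intro t ht
  refine eq_of_hasDerivWithinAt_Ici_zero (f := fun r => ∑ j : Fin (n + 1),
    ∫ y in (x j.castSucc : ℝ)..(x j.succ : ℝ), ‖(uh r j).eval (y : ℂ)‖ ^ 2) (fun s hs => ?_) ht
  refine (HasDerivWithinAt.fun_sum fun j _ =>
    hasDerivWithinAt_integral_norm_sq_eval (u := fun r => uh r j) (x j.castSucc) (x j.succ)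
      (Set.mem_Ici.2 hs) (fun r hr => hdegu r hr j) (hdegut s hs j)
      (hderiv s hs j)).congr_deriv ?_
  rw [← Finset.mul_sum, ← Complex.re_sum,
    re_sum_integral_mul_conj_eq_zero hF' (hdegu s hs) (hdegw s hs) (scheme1 s hs) (scheme2 s hs),
    mul_zero]

/-- **Theorem 2.1, conservation of mass / L²-stability of the semi-discrete DG scheme**:
if `(u_h, w_h)` is a solution of the semi-discrete DG scheme for the nonlinear biharmonic
Schrödinger equation `i u_t + u_xxxx + u F'(|u|²) = 0` with the numerical fluxes given by
parameters `α₁, α₂ ∈ [0,1]`, then the discrete mass `M_h(t) = ∫_I |u_h(x,t)|² dx`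
satisfies `M_h(t) = M_h(0)` for all `t ≥ 0`.  The interval `I` is partitioned into the
`n+1` cells `I_j = (x_{j−1/2}, x_{j+1/2})`, `u_h(t), w_h(t)` lie in the space `V_h^q` of
piecewise polynomials of degree `≤ q`, `∂ₜu_h = u_ht` pointwise, and interfaces are
treated periodically (`j + 1` and `j - 1` are computed in `Fin (n+1)`). -/
theorem dg_mass_conservation
    (n q : ℕ) (hq : 1 ≤ q)
    (x : Fin (n + 2) → ℝ) (hx : StrictMono x)
    (F' : ℝ → ℝ) (hF' : ContinuousOn F' (Set.Ici 0))
    (α₁ α₂ : ℝ) (hα₁ : α₁ ∈ Set.Icc (0 : ℝ) 1) (hα₂ : α₂ ∈ Set.Icc (0 : ℝ) 1)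
    (uh wh uht : ℝ → Fin (n + 1) → Polynomial ℂ)
    (hdegu : ∀ t : ℝ, 0 ≤ t → ∀ j, (uh t j).natDegree ≤ q)
    (hdegw : ∀ t : ℝ, 0 ≤ t → ∀ j, (wh t j).natDegree ≤ q)
    (hdegut : ∀ t : ℝ, 0 ≤ t → ∀ j, (uht t j).natDegree ≤ q)
    -- u_h is differentiable in time with derivative u_ht
    (hderiv : ∀ t : ℝ, 0 ≤ t → ∀ j, ∀ y : ℝ,
      HasDerivWithinAt (fun s : ℝ => (uh s j).eval ((y : ℝ) : ℂ))
        ((uht t j).eval ((y : ℝ) : ℂ)) (Set.Ici 0) t)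
    -- first DG scheme equation, on each cell, for every test polynomial φ of degree ≤ q
    (scheme1 : ∀ t : ℝ, 0 ≤ t → ∀ j : Fin (n + 1), ∀ φ : Polynomial ℂ, φ.natDegree ≤ q →
      (∫ y in (x j.castSucc : ℝ)..(x j.succ : ℝ),
          Complex.I * (uht t j).eval ((y : ℝ) : ℂ) * φ.eval ((y : ℝ) : ℂ)
            + (wh t j).eval ((y : ℝ) : ℂ) * (φ.derivative.derivative).eval ((y : ℝ) : ℂ)
            + (uh t j).eval ((y : ℝ) : ℂ)
                * (F' (‖(uh t j).eval ((y : ℝ) : ℂ)‖ ^ 2) : ℂ)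
                * φ.eval ((y : ℝ) : ℂ)) =
        - fluxWx n x α₁ (wh t) j * φ.eval ((x j.succ : ℝ) : ℂ)
          + fluxWx n x α₁ (wh t) (j - 1) * φ.eval ((x j.castSucc : ℝ) : ℂ)
          + fluxWtilde n x α₂ (wh t) j * φ.derivative.eval ((x j.succ : ℝ) : ℂ)
          - fluxWtilde n x α₂ (wh t) (j - 1) * φ.derivative.eval ((x j.castSucc : ℝ) : ℂ))
    -- second DG scheme equation, on each cell, for every test polynomial ψ of degree ≤ q
    (scheme2 : ∀ t : ℝ, 0 ≤ t → ∀ j : Fin (n + 1), ∀ ψ : Polynomial ℂ, ψ.natDegree ≤ q →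
      (∫ y in (x j.castSucc : ℝ)..(x j.succ : ℝ),
          (wh t j).eval ((y : ℝ) : ℂ) * ψ.eval ((y : ℝ) : ℂ)
            - (uh t j).eval ((y : ℝ) : ℂ) * (ψ.derivative.derivative).eval ((y : ℝ) : ℂ)) =
        fluxUx n x α₂ (uh t) j * ψ.eval ((x j.succ : ℝ) : ℂ)
          - fluxUx n x α₂ (uh t) (j - 1) * ψ.eval ((x j.castSucc : ℝ) : ℂ)
          - fluxUhat n x α₁ (uh t) j * ψ.derivative.eval ((x j.succ : ℝ) : ℂ)
          + fluxUhat n x α₁ (uh t) (j - 1) * ψ.derivative.eval ((x j.castSucc : ℝ) : ℂ)) :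
    -- conclusion: conservation of the discrete mass M_h(t) = ∫_I |u_h|² dx
    ∀ t : ℝ, 0 ≤ t →
      (∑ j : Fin (n + 1), ∫ y in (x j.castSucc : ℝ)..(x j.succ : ℝ),
          ‖(uh t j).eval ((y : ℝ) : ℂ)‖ ^ 2) =
      ∑ j : Fin (n + 1), ∫ y in (x j.castSucc : ℝ)..(x j.succ : ℝ),
          ‖(uh 0 j).eval ((y : ℝ) : ℂ)‖ ^ 2 :=
  dg_mass_conservation_general n q x F' hF' α₁ α₂ uh wh uht hdegu hdegw hdegut hderiv scheme1
    scheme2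

end
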